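/- arXiv:math/9811131 — 4 statements merged into one kernel-verified Lean document; each statement's English description precedes it below -/
import Mathlib

section
/- The kernel of φ_{n,d} is generated, as an ideal of K[Y_m : m ∈ M_{n,d}], by its elements that are homogeneous of degree 2 in the variables Y_m. (This is the quadric-generation part, property N_1, of the syzygies of the d-uple Veronese embedding.) -/
noncomputable section

/-- The set of exponent vectors `m : {0,…,n} → ℕ` with `Σ_i m(i) = d`. -/
def ExpVec (n d : ℕ) : Type := {m : Fin (n + 1) → ℕ // ∑ i, m i = d}

/-- The `K`-algebra map `K[Y_m : m ∈ M_{n,d}] → K[x_0,…,x_n]`, `Y_m ↦ x^m`. -/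
def veroneseMap (K : Type*) [Field K] (n d : ℕ) :
    MvPolynomial (ExpVec n d) K →ₐ[K] MvPolynomial (Fin (n + 1)) K :=
  MvPolynomial.aeval fun m => ∏ i, MvPolynomial.X i ^ (m.1 i)

namespace VeroAux

open MvPolynomial Finsupp

variable {K : Type*} [Field K] {n d : ℕ}

def iota (m : ExpVec n d) : Fin (n + 1) →₀ ℕ := Finsupp.equivFunOnFinite.symm m.1

@[simp] lemma iota_apply (m : ExpVec n d) (i : Fin (n + 1)) : iota m i = m.1 i := rfl

def tau (s : ExpVec n d →₀ ℕ) : Fin (n + 1) →₀ ℕ := s.sum fun m k => k • iota m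

@[simp] lemma tau_zero : tau (0 : ExpVec n d →₀ ℕ) = 0 := Finsupp.sum_zero_index

lemma tau_add (s t : ExpVec n d →₀ ℕ) : tau (s + t) = tau s + tau t :=
  Finsupp.sum_add_index' (fun a => zero_smul _ _) (fun a b₁ b₂ => add_smul _ _ _)

lemma tau_single (m : ExpVec n d) (k : ℕ) : tau (Finsupp.single m k) = k • iota m :=
  Finsupp.sum_single_index (zero_smul _ _)

lemma deg_def (s : ExpVec n d →₀ ℕ) : s.degree = s.sum fun _ c => c := rfl

lemma deg_add (s t : ExpVec n d →₀ ℕ) : (s + t).degree = s.degree + t.degree := by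
  simp only [deg_def]
  exact Finsupp.sum_add_index' (fun _ => rfl) (fun _ _ _ => rfl)

lemma deg_single (m : ExpVec n d) (k : ℕ) : (Finsupp.single m k).degree = k := by
  rw [deg_def, Finsupp.sum_single_index]; rfl

lemma sum_iota (m : ExpVec n d) : ∑ i, iota m i = d := m.2

lemma sum_tau (s : ExpVec n d →₀ ℕ) : ∑ i, tau s i = d * s.degree := by
  induction s using Finsupp.induction with
  | zero => simp
  | single_add m k t hm hk ih =>
      rw [tau_add, tau_single, deg_add, deg_single]
      simp only [Finsupp.add_apply, Finsupp.smul_apply, smul_eq_mul]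
      rw [Finset.sum_add_distrib, ← Finset.mul_sum, sum_iota, ih]
      ring

lemma tau_eq_zero (hd : 1 ≤ d) {t : ExpVec n d →₀ ℕ} (h : tau t = 0) : t = 0 := by
  have h1 : ∑ i, tau t i = 0 := by rw [h]; simp
  rw [sum_tau] at h1
  have : t.degree = 0 := by
    rcases Nat.mul_eq_zero.mp h1 with h' | h'
    · omega
    · exact h'
  exact (Finsupp.degree_eq_zero_iff t).mp this

lemma phi_X (m : ExpVec n d) :
    veroneseMap K n d (X m) = monomial (iota m) 1 := by
  rw [veroneseMap, aeval_X, ← prod_X_pow_eq_monomial]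
  refine (Finset.prod_subset (Finset.subset_univ _) ?_).symm
  intro x _ hx
  have : iota m x = 0 := Finsupp.notMem_support_iff.mp hx
  rw [iota_apply] at this
  rw [this, pow_zero]

lemma phi_monomial (s : ExpVec n d →₀ ℕ) (c : K) :
    veroneseMap K n d (monomial s c) = monomial (tau s) c := by
  induction s using Finsupp.induction with
  | zero => rw [monomial_zero', tau_zero, monomial_zero']; exact (veroneseMap K n d).commutes c
  | single_add m k t hm hk ih =>
      have h1 : monomial (Finsupp.single m k + t) c
          = (X m : MvPolynomial (ExpVec n d) K) ^ k * monomial t c := by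
        rw [X_pow_eq_monomial, monomial_mul, one_mul]
      rw [h1, map_mul, map_pow, phi_X, ih, monomial_pow, one_pow, monomial_mul, one_mul,
        tau_add, tau_single]

lemma phi_apply (f : MvPolynomial (ExpVec n d) K) :
    veroneseMap K n d f = ∑ s ∈ f.support, monomial (tau s) (coeff s f) := by
  conv_lhs => rw [f.as_sum]
  rw [map_sum]
  exact Finset.sum_congr rfl fun s _ => phi_monomial s _

lemma exists_partner {f : MvPolynomial (ExpVec n d) K} (hf : veroneseMap K n d f = 0)
    {s : ExpVec n d →₀ ℕ} (hs : s ∈ f.support) :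
    ∃ s' ∈ f.support, s' ≠ s ∧ tau s' = tau s := by
  by_contra h
  push_neg at h
  have h0 : coeff (tau s) (veroneseMap K n d f) = 0 := by rw [hf]; simp
  rw [phi_apply] at h0
  rw [MvPolynomial.coeff_sum] at h0
  rw [Finset.sum_eq_single s (fun u hu hne => ?_) (fun hs' => absurd hs hs')] at h0
  · rw [coeff_monomial, if_pos rfl] at h0
    exact MvPolynomial.mem_support_iff.mp hs h0
  · rw [coeff_monomial, if_neg (h u hu hne)]


def Qid (K : Type*) [Field K] (n d : ℕ) : Ideal (MvPolynomial (ExpVec n d) K) :=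
  Ideal.span {p : MvPolynomial (ExpVec n d) K |
    p ∈ RingHom.ker (veroneseMap K n d).toRingHom ∧ p.IsHomogeneous 2}

lemma mem_ker_iff (p : MvPolynomial (ExpVec n d) K) :
    p ∈ RingHom.ker (veroneseMap K n d).toRingHom ↔ veroneseMap K n d p = 0 := by
  rw [RingHom.mem_ker]; rfl

lemma tau_apply (s : ExpVec n d →₀ ℕ) (i : Fin (n + 1)) :
    tau s i = ∑ m ∈ s.support, s m * m.1 i := by
  rw [tau, Finsupp.sum, Finsupp.finset_sum_apply]
  exact Finset.sum_congr rfl fun m _ => by rw [Finsupp.smul_apply, iota_apply, smul_eq_mul]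

/-- Binomials whose two monomials have equal image are in the kernel. -/
lemma binom_ker {s t : ExpVec n d →₀ ℕ} (h : tau s = tau t) :
    (monomial s (1 : K) - monomial t 1) ∈ RingHom.ker (veroneseMap K n d).toRingHom := by
  rw [mem_ker_iff, map_sub, phi_monomial, phi_monomial, h, sub_self]

/-- Quadric binomials lie in `Qid`. -/
lemma quad_mem {b c b' c' : ExpVec n d} (h : iota b + iota c = iota b' + iota c') :
    (monomial (Finsupp.single b 1 + Finsupp.single c 1) (1 : K)
      - monomial (Finsupp.single b' 1 + Finsupp.single c' 1) 1) ∈ Qid K n d := by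
  apply Ideal.subset_span
  refine ⟨binom_ker ?_, ?_⟩
  · rw [tau_add, tau_add, tau_single, tau_single, tau_single, tau_single,
      one_smul, one_smul, one_smul, one_smul, h]
  · refine MvPolynomial.IsHomogeneous.sub (isHomogeneous_monomial _ ?_)
      (isHomogeneous_monomial _ ?_) <;>
    rw [deg_add, deg_single, deg_single]

lemma sum_adjust' (f g : Fin (n + 1) → ℕ) (i j : Fin (n + 1)) (hij : i ≠ j) (k : ℕ)
    (hoff : ∀ x, x ≠ i → x ≠ j → f x = g x) (hij2 : f i + f j = g i + g j + k) :
    ∑ x, f x = (∑ x, g x) + k := by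
  have hi : i ∈ (Finset.univ : Finset (Fin (n + 1))) := Finset.mem_univ i
  have hj : j ∈ Finset.univ.erase i := Finset.mem_erase.mpr ⟨fun e => hij e.symm, Finset.mem_univ j⟩
  rw [← Finset.sum_erase_add _ f hi, ← Finset.sum_erase_add _ f hj,
    ← Finset.sum_erase_add _ g hi, ← Finset.sum_erase_add _ g hj]
  have hcongr : ∑ x ∈ (Finset.univ.erase i).erase j, f x
      = ∑ x ∈ (Finset.univ.erase i).erase j, g x := by
    refine Finset.sum_congr rfl fun x hx => ?_
    have h1 := Finset.mem_erase.mp hx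
    have h2 := Finset.mem_erase.mp h1.2
    exact hoff x h2.1 h1.1
  omega


lemma swap_lemma (hd : 1 ≤ d) : ∀ (N : ℕ) (a b : ExpVec n d) (t : ExpVec n d →₀ ℕ),
    b ∈ t.support → (∑ i, (a.1 i - b.1 i)) = N → iota a ≤ tau t →
    ∃ t₀ : ExpVec n d →₀ ℕ, tau (Finsupp.single a 1 + t₀) = tau t ∧
      (monomial t (1 : K) - monomial (Finsupp.single a 1 + t₀) 1) ∈ Qid K n d := by
  intro N
  induction N with
  | zero =>
      intro a b t hb hN _
      have hab : a = b := by
        have hle : ∀ i, a.1 i ≤ b.1 i := by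
          intro i
          have := Finset.sum_eq_zero_iff.mp hN i (Finset.mem_univ i)
          omega
        have hsum : ∑ i, a.1 i = ∑ i, b.1 i := by rw [a.2, b.2]
        have : ∀ i ∈ Finset.univ, a.1 i = b.1 i :=
          (Finset.sum_eq_sum_iff_of_le fun i _ => hle i).mp hsum
        exact Subtype.ext (funext fun i => this i (Finset.mem_univ i))
      subst hab
      have hone : Finsupp.single a 1 ≤ t :=
        Finsupp.single_le_iff.mpr (Nat.one_le_iff_ne_zero.mpr (Finsupp.mem_support_iff.mp hb))
      refine ⟨t - Finsupp.single a 1, ?_, ?_⟩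
      · rw [add_tsub_cancel_of_le hone]
      · rw [add_tsub_cancel_of_le hone, sub_self]; exact zero_mem _
  | succ N ih =>
      intro a b t hb hN hle
      -- there is a coordinate where a exceeds b
      have hex : ∃ i, b.1 i < a.1 i := by
        by_contra h
        push_neg at h
        have : ∑ i, (a.1 i - b.1 i) = 0 := Finset.sum_eq_zero fun i _ => by
          have := h i; omega
        omega
      obtain ⟨i, hi⟩ := hex
      have hex2 : ∃ j, a.1 j < b.1 j := by
        by_contra h
        push_neg at h
        have h1 : ∑ x, b.1 x < ∑ x, a.1 x :=
          Finset.sum_lt_sum (fun x _ => h x) ⟨i, Finset.mem_univ i, hi⟩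
        rw [a.2, b.2] at h1
        omega
      obtain ⟨j, hj⟩ := hex2
      have hij : i ≠ j := fun e => by rw [e] at hi; omega
      -- split off b from t
      have hbone : Finsupp.single b 1 ≤ t :=
        Finsupp.single_le_iff.mpr (Nat.one_le_iff_ne_zero.mpr (Finsupp.mem_support_iff.mp hb))
      set t₂ := t - Finsupp.single b 1 with ht₂
      have htsplit : Finsupp.single b 1 + t₂ = t := add_tsub_cancel_of_le hbone
      have htaut : tau t = iota b + tau t₂ := by
        rw [← htsplit, tau_add, tau_single, one_smul]
      -- coordinate i of tau t₂ is positive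
      have htaui : 0 < tau t₂ i := by
        have h2 : iota a i ≤ tau t i := hle i
        rw [htaut] at h2
        simp only [Finsupp.add_apply, iota_apply] at h2
        omega
      -- find c in t₂'s support with positive i-th coordinate
      have hc : ∃ c ∈ t₂.support, 0 < c.1 i := by
        by_contra h
        push_neg at h
        have : tau t₂ i = 0 := by
          rw [tau_apply]
          exact Finset.sum_eq_zero fun m hm => by rw [Nat.le_zero.mp (h m hm), mul_zero]
        omega
      obtain ⟨c, hcsupp, hci⟩ := hc
      have hcone : Finsupp.single c 1 ≤ t₂ :=
        Finsupp.single_le_iff.mpr (Nat.one_le_iff_ne_zero.mpr (Finsupp.mem_support_iff.mp hcsupp))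
      set t₃ := t₂ - Finsupp.single c 1 with ht₃
      have ht₂split : Finsupp.single c 1 + t₃ = t₂ := add_tsub_cancel_of_le hcone
      -- define the swapped vectors b', c'
      set bf : Fin (n + 1) → ℕ :=
        fun x => if x = i then b.1 x + 1 else if x = j then b.1 x - 1 else b.1 x with hbf
      set cf : Fin (n + 1) → ℕ :=
        fun x => if x = i then c.1 x - 1 else if x = j then c.1 x + 1 else c.1 x with hcf
      have hji : j ≠ i := Ne.symm hij
      have hbfi : bf i = b.1 i + 1 := by rw [hbf]; simp
      have hbfj : bf j = b.1 j - 1 := by rw [hbf]; simp [hji]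
      have hbfo : ∀ x, x ≠ i → x ≠ j → bf x = b.1 x := by
        intro x h1 h2; rw [hbf]; simp [h1, h2]
      have hcfi : cf i = c.1 i - 1 := by rw [hcf]; simp
      have hcfj : cf j = c.1 j + 1 := by rw [hcf]; simp [hji]
      have hcfo : ∀ x, x ≠ i → x ≠ j → cf x = c.1 x := by
        intro x h1 h2; rw [hcf]; simp [h1, h2]
      have hbsum : ∑ x, bf x = d := by
        rw [← b.2]
        refine sum_adjust' bf b.1 i j hij 0 hbfo ?_
        rw [hbfi, hbfj]; omega
      have hcsum : ∑ x, cf x = d := by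
        rw [← c.2]
        refine sum_adjust' cf c.1 i j hij 0 hcfo ?_
        rw [hcfi, hcfj]; omega
      set b' : ExpVec n d := ⟨bf, hbsum⟩ with hb'
      set c' : ExpVec n d := ⟨cf, hcsum⟩ with hc'
      have hb'1 : b'.1 = bf := rfl
      have hc'1 : c'.1 = cf := rfl
      have hkey : iota b + iota c = iota b' + iota c' := by
        ext x
        simp only [Finsupp.add_apply, iota_apply, hb'1, hc'1]
        by_cases hxi : x = i
        · subst hxi; rw [hbfi, hcfi]; omega
        · by_cases hxj : x = j
          · subst hxj; rw [hbfj, hcfj]; omega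
          · rw [hbfo x hxi hxj, hcfo x hxi hxj]
      set t₁ := Finsupp.single b' 1 + Finsupp.single c' 1 + t₃ with ht₁
      have htau1 : tau t₁ = tau t := by
        rw [ht₁, tau_add, tau_add, tau_single, tau_single, one_smul, one_smul,
          htaut, ← ht₂split, tau_add, tau_single, one_smul, ← hkey, add_assoc]
      -- the quadric step
      have hstep : (monomial t (1 : K) - monomial t₁ 1) ∈ Qid K n d := by
        have hq := quad_mem (K := K) hkey
        have heq : monomial t (1 : K) - monomial t₁ 1
            = monomial t₃ 1 * (monomial (Finsupp.single b 1 + Finsupp.single c 1) (1 : K)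
              - monomial (Finsupp.single b' 1 + Finsupp.single c' 1) 1) := by
          rw [mul_sub, monomial_mul, monomial_mul, one_mul]
          have e1 : t₃ + (Finsupp.single b 1 + Finsupp.single c 1) = t := by
            rw [← htsplit, ← ht₂split]; abel
          have e2 : t₃ + (Finsupp.single b' 1 + Finsupp.single c' 1) = t₁ := by
            rw [ht₁]; abel
          rw [e1, e2]
        rw [heq]
        exact Ideal.mul_mem_left _ _ hq
      -- measure decreases
      have hmeas : ∑ x, (a.1 x - bf x) = N := by
        have h2 : (∑ x, (a.1 x - b.1 x)) = (∑ x, (a.1 x - bf x)) + 1 := by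
          refine sum_adjust' (fun x => a.1 x - b.1 x) (fun x => a.1 x - bf x) i j hij 1
            (fun x h1 h2 => by show a.1 x - b.1 x = a.1 x - bf x; rw [hbfo x h1 h2]) ?_
          show a.1 i - b.1 i + (a.1 j - b.1 j) = a.1 i - bf i + (a.1 j - bf j) + 1
          rw [hbfi, hbfj]; omega
        omega
      -- b' is in the support of t₁
      have hb't₁ : b' ∈ t₁.support := by
        rw [Finsupp.mem_support_iff, ht₁, Finsupp.add_apply, Finsupp.add_apply,
          Finsupp.single_eq_same]
        omega
      have hle1 : iota a ≤ tau t₁ := by rw [htau1]; exact hle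
      obtain ⟨t₀, htau0, hmem0⟩ := ih a b' t₁ hb't₁ hmeas hle1
      refine ⟨t₀, by rw [htau0, htau1], ?_⟩
      have hfin : monomial t (1 : K) - monomial (Finsupp.single a 1 + t₀) 1
          = (monomial t 1 - monomial t₁ 1)
            + (monomial t₁ 1 - monomial (Finsupp.single a 1 + t₀) 1) := by
        ring
      rw [hfin]
      exact add_mem hstep hmem0


lemma binom_mem (hd : 1 ≤ d) : ∀ (k : ℕ) (s t : ExpVec n d →₀ ℕ), s.degree = k →
    tau s = tau t → (monomial s (1 : K) - monomial t 1) ∈ Qid K n d := by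
  intro k
  induction k with
  | zero =>
      intro s t hdeg htau
      have hs : s = 0 := (Finsupp.degree_eq_zero_iff s).mp hdeg
      have ht : t = 0 := tau_eq_zero hd (by rw [← htau, hs, tau_zero])
      rw [hs, ht, sub_self]
      exact zero_mem _
  | succ k ih =>
      intro s t hdeg htau
      have hs0 : s ≠ 0 := by
        intro e
        rw [e, map_zero] at hdeg
        omega
      obtain ⟨a, ha⟩ := Finsupp.support_nonempty_iff.mpr hs0
      have haone : Finsupp.single a 1 ≤ s :=
        Finsupp.single_le_iff.mpr (Nat.one_le_iff_ne_zero.mpr (Finsupp.mem_support_iff.mp ha))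
      set s₀ := s - Finsupp.single a 1 with hs₀
      have hsplit : Finsupp.single a 1 + s₀ = s := add_tsub_cancel_of_le haone
      have hdeg₀ : s₀.degree = k := by
        have h1 := deg_add (Finsupp.single a 1) s₀
        rw [hsplit, deg_single, hdeg] at h1
        omega
      have ht0 : t ≠ 0 := by
        intro e
        rw [e, tau_zero] at htau
        exact hs0 (tau_eq_zero hd htau)
      obtain ⟨b, hb⟩ := Finsupp.support_nonempty_iff.mpr ht0
      have hle : iota a ≤ tau t := by
        rw [← htau, ← hsplit, tau_add, tau_single, one_smul]
        exact le_add_right le_rfl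
      obtain ⟨t₀, htau', hmem⟩ := swap_lemma (K := K) hd _ a b t hb rfl hle
      have htau₀ : tau s₀ = tau t₀ := by
        have h1 : iota a + tau s₀ = iota a + tau t₀ := by
          have e1 : tau s = iota a + tau s₀ := by
            rw [← hsplit, tau_add, tau_single, one_smul]
          have e2 : tau (Finsupp.single a 1 + t₀) = iota a + tau t₀ := by
            rw [tau_add, tau_single, one_smul]
          rw [← e1, ← e2, htau', htau]
        exact add_left_cancel h1
      have hQ := ih s₀ t₀ hdeg₀ htau₀
      have h2 : (monomial s (1 : K) - monomial (Finsupp.single a 1 + t₀) 1) ∈ Qid K n d := by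
        have heq : monomial s (1 : K) - monomial (Finsupp.single a 1 + t₀) 1
            = monomial (Finsupp.single a 1) 1 * (monomial s₀ (1 : K) - monomial t₀ 1) := by
          rw [mul_sub, monomial_mul, monomial_mul, one_mul, hsplit]
        rw [heq]
        exact Ideal.mul_mem_left _ _ hQ
      have heq2 : monomial s (1 : K) - monomial t 1
          = (monomial s 1 - monomial (Finsupp.single a 1 + t₀) 1)
            - (monomial t 1 - monomial (Finsupp.single a 1 + t₀) 1) := by ring
      rw [heq2]
      exact sub_mem h2 hmem

lemma ker_le_Q (hd : 1 ≤ d) : ∀ (N : ℕ) (f : MvPolynomial (ExpVec n d) K),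
    f.support.card ≤ N → veroneseMap K n d f = 0 → f ∈ Qid K n d := by
  intro N
  induction N with
  | zero =>
      intro f hcard _
      have : f = 0 := by
        rw [← MvPolynomial.support_eq_empty, ← Finset.card_eq_zero]
        omega
      rw [this]
      exact zero_mem _
  | succ N ih =>
      intro f hcard hker
      classical
      by_cases hf0 : f = 0
      · rw [hf0]; exact zero_mem _
      obtain ⟨s, hs⟩ := Finset.nonempty_iff_ne_empty.mpr
        (fun e => hf0 (MvPolynomial.support_eq_empty.mp e))
      obtain ⟨s', hs', hne, htau⟩ := exists_partner hker hs
      set c := coeff s f with hcdef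
      set B : MvPolynomial (ExpVec n d) K := monomial s 1 - monomial s' 1 with hB
      have hBQ : B ∈ Qid K n d := binom_mem hd s.degree s s' rfl htau.symm
      have hBker : veroneseMap K n d B = 0 := by
        rw [hB, map_sub, phi_monomial, phi_monomial, htau, sub_self]
      set g := f - C c * B with hg
      have hgker : veroneseMap K n d g = 0 := by
        rw [hg, map_sub, map_mul, hker, hBker, mul_zero, sub_zero]
      have hgsupp : g.support ⊆ f.support.erase s := by
        intro u hu
        have hcu : coeff u g ≠ 0 := MvPolynomial.mem_support_iff.mp hu
        rw [Finset.mem_erase]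
        constructor
        · intro e
          subst e
          apply hcu
          rw [hg, MvPolynomial.coeff_sub, MvPolynomial.coeff_C_mul, hB,
            MvPolynomial.coeff_sub, MvPolynomial.coeff_monomial, if_pos rfl,
            MvPolynomial.coeff_monomial, if_neg hne, ← hcdef]
          ring
        · by_contra hu'
          have hfu : coeff u f = 0 := MvPolynomial.notMem_support_iff.mp hu'
          have hus : s ≠ u := fun e => hu' (e ▸ hs)
          have hus' : s' ≠ u := fun e => hu' (e ▸ hs')
          apply hcu
          rw [hg, MvPolynomial.coeff_sub, MvPolynomial.coeff_C_mul, hB,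
            MvPolynomial.coeff_sub, MvPolynomial.coeff_monomial, if_neg hus,
            MvPolynomial.coeff_monomial, if_neg hus', hfu]
          ring
      have hgcard : g.support.card ≤ N := by
        have h1 := Finset.card_le_card hgsupp
        rw [Finset.card_erase_of_mem hs] at h1
        have h2 : 1 ≤ f.support.card := Finset.card_pos.mpr ⟨s, hs⟩
        omega
      have hgQ : g ∈ Qid K n d := ih g hgcard hgker
      have hfg : f = g + C c * B := by rw [hg]; ring
      rw [hfg]
      exact add_mem hgQ (Ideal.mul_mem_left _ _ hBQ)

end VeroAux

/-- the kernel of `φ_{n,d}` is generated, as an ideal, by its elements that are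
homogeneous of degree `2` in the variables `Y_m` (property `N_1` of the Veronese embedding). -/
theorem stmt1 (K : Type*) [Field K] [CharZero K] (n d : ℕ) (hn : 1 ≤ n) (hd : 1 ≤ d) :
    RingHom.ker (veroneseMap K n d).toRingHom =
      Ideal.span {p : MvPolynomial (ExpVec n d) K |
        p ∈ RingHom.ker (veroneseMap K n d).toRingHom ∧ p.IsHomogeneous 2} := by
  have hQ : Ideal.span {p : MvPolynomial (ExpVec n d) K |
      p ∈ RingHom.ker (veroneseMap K n d).toRingHom ∧ p.IsHomogeneous 2} = VeroAux.Qid K n d :=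
    rfl
  rw [hQ]
  apply le_antisymm
  · intro f hf
    exact VeroAux.ker_le_Q hd f.support.card f le_rfl ((VeroAux.mem_ker_iff f).mp hf)
  · rw [VeroAux.Qid, Ideal.span_le]
    intro p hp
    exact hp.1


end
end

section
/- Let q and t be integers with q ≥ 1, t ≥ 1, q ≤ C(n+d,n) − 1 and q + 1 ≤ C(n+t,n). Then the map δ_{q,t} : ⋀^q S_d ⊗ S_t → ⋀^{q−1} S_d ⊗ S_{t+d} has nonzero kernel. (Equivalently, the bundle ⋀^q E_d(t) on P^n has a nonzero global section.) -/
open TensorProduct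

noncomputable section

variable (K : Type*) [Field K]

/-- `S K n e` is the space of homogeneous polynomials of degree `e`
in the `n+1` variables `x_0, …, x_n`. -/
abbrev S (n e : ℕ) : Submodule K (MvPolynomial (Fin (n + 1)) K) :=
  MvPolynomial.homogeneousSubmodule (Fin (n + 1)) K e

/-- The product of a homogeneous polynomial of degree `d` with one of degree `b`,
viewed as an element of degree `b + d`. -/
def mulSW {n d b : ℕ} (s : S K n d) (w : S K n b) : S K n (b + d) :=
  ⟨(s : MvPolynomial (Fin (n + 1)) K) * (w : MvPolynomial (Fin (n + 1)) K), by
    rw [MvPolynomial.mem_homogeneousSubmodule, Nat.add_comm b d]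
    exact ((MvPolynomial.mem_homogeneousSubmodule _ _).1 s.2).mul
      ((MvPolynomial.mem_homogeneousSubmodule _ _).1 w.2)⟩

/-- Identification of spaces of homogeneous polynomials of equal degrees. -/
def scast {n e₁ e₂ : ℕ} (h : e₁ = e₂) : S K n e₁ ≃ₗ[K] S K n e₂ :=
  LinearEquiv.ofEq _ _ (by rw [h])

/-- The increasing injection `Fin (a-1) → Fin a` omitting `j`. -/
def skipAt {a : ℕ} (j : Fin a) (i : Fin (a - 1)) : Fin a :=
  if (i : ℕ) < (j : ℕ) then ⟨i, by have := i.isLt; omega⟩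
  else ⟨(i : ℕ) + 1, by have := i.isLt; omega⟩

/-- The wedge `v 0 ∧ ⋯ ∧ v (a-1)` as an element of the `a`-th exterior power. -/
def wedge {M : Type*} [AddCommGroup M] [Module K M] (a : ℕ) (v : Fin a → M) :
    ⋀[K]^a M :=
  ⟨ExteriorAlgebra.ιMulti K a v, ExteriorAlgebra.ιMulti_range K a ⟨v, rfl⟩⟩

/-- `IsKoszulMap K n d a b δ` says that `δ : ⋀^a S_d ⊗ S_b → ⋀^{a-1} S_d ⊗ S_{b+d}` is
the Koszul map, i.e. it satisfies
`δ((s_1 ∧ ⋯ ∧ s_a) ⊗ w) = Σ_j (−1)^{j−1} (s_1 ∧ ⋯ ∧ ŝ_j ∧ ⋯ ∧ s_a) ⊗ (s_j·w)`. -/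
def IsKoszulMap (n d a b : ℕ)
    (δ : ((⋀[K]^a (S K n d)) ⊗[K] (S K n b)) →ₗ[K]
         ((⋀[K]^(a - 1) (S K n d)) ⊗[K] (S K n (b + d)))) : Prop :=
  ∀ (s : Fin a → S K n d) (w : S K n b),
    δ (wedge K a s ⊗ₜ[K] w) =
      ∑ j : Fin a, ((-1 : K) ^ (j : ℕ)) •
        ((wedge K (a - 1) fun i => s (skipAt j i)) ⊗ₜ[K] mulSW K (s j) w)

/-- Exactness of the Veronese–Koszul complex at `(i, q)`:
`ker δ_{i,qd} = im δ_{i+1,(q−1)d}` inside `⋀^i S_d ⊗ S_{qd}`. -/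
def VKExact (n d i q : ℕ) : Prop :=
  ∀ (h : (q - 1) * d + d = q * d)
    (δ₁ : ((⋀[K]^i (S K n d)) ⊗[K] (S K n (q * d))) →ₗ[K]
          ((⋀[K]^(i - 1) (S K n d)) ⊗[K] (S K n (q * d + d))))
    (δ₂ : ((⋀[K]^(i + 1) (S K n d)) ⊗[K] (S K n ((q - 1) * d))) →ₗ[K]
          ((⋀[K]^i (S K n d)) ⊗[K] (S K n ((q - 1) * d + d)))),
    IsKoszulMap K n d i (q * d) δ₁ → IsKoszulMap K n d (i + 1) ((q - 1) * d) δ₂ →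
    LinearMap.ker δ₁ =
      LinearMap.range
        ((TensorProduct.congr (LinearEquiv.refl K (⋀[K]^i (S K n d)))
            (scast K h)).toLinearMap ∘ₗ δ₂)

end

/-!
Put `m = min d t` and pick `q + 1` linearly independent forms `p₀, …, p_q` of degree `m`, which
exist because `dim S_m = C(n+m, n) ≥ q + 1`. Then `s_j = x₀^(d-m) p_j ∈ S_d` and
`w_j = x₀^(t-m) p_j ∈ S_t` satisfy `s_j w_k = s_k w_j`, i.e. the `2 × (q+1)` matrix with rows
`s` and `w` has rank one. Expanding `δ` on `ξ = Σ_k (-1)^k (s₀ ∧ ⋯ ∧ ŝ_k ∧ ⋯ ∧ s_q) ⊗ w_k`, the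
terms in which `s_j` and `s_k` have been removed cancel in pairs, so `ξ ∈ ker δ`. Finally `ξ ≠ 0`:
the `q`-fold wedges of the independent `s_j` are independent, and so are the `w_k`.
-/

open MvPolynomial

section

variable {K : Type*} [Field K]

lemma skipAt_val {a : ℕ} (j : Fin a) (i : Fin (a - 1)) :
    (skipAt j i : ℕ) = if (i : ℕ) < j then (i : ℕ) else i + 1 := by
  unfold skipAt; split_ifs <;> rfl

lemma skipAt_eq_succAbove {q : ℕ} (k : Fin (q + 1)) : skipAt k = k.succAbove := by
  funext i
  ext
  simp only [skipAt_val, Fin.succAbove, Fin.lt_def, Fin.val_castSucc]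
  split_ifs <;> rfl

/-- Removing two indices from `Fin (q + 1)` one after the other can be done in two orders:
`(k, j)` removes `k` first, then the `j`-th remaining index `k' = skipAt k j`, and
`skipSwap q (k, j) = (k', j')` removes `k'` first, then `k = skipAt k' j'`. -/
def skipSwap (q : ℕ) (p : Fin (q + 1) × Fin q) : Fin (q + 1) × Fin q :=
  (skipAt p.1 p.2,
    if h : (p.2 : ℕ) < p.1 then ⟨p.1 - 1, by have := p.1.isLt; omega⟩
    else ⟨p.1, by have := p.2.isLt; omega⟩)

variable {q : ℕ}

lemma skipSwap_fst (p : Fin (q + 1) × Fin q) : (skipSwap q p).1 = skipAt p.1 p.2 := rfl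

lemma skipSwap_snd_val (p : Fin (q + 1) × Fin q) :
    ((skipSwap q p).2 : ℕ) = if (p.2 : ℕ) < p.1 then (p.1 : ℕ) - 1 else p.1 := by
  unfold skipSwap; split_ifs <;> rfl

lemma skipAt_skipSwap (p : Fin (q + 1) × Fin q) :
    skipAt (skipSwap q p).1 (skipSwap q p).2 = p.1 := by
  ext
  simp only [skipAt_val, skipSwap_fst, skipSwap_snd_val]
  split_ifs <;> omega

lemma skipAt_skipAt_skipSwap (p : Fin (q + 1) × Fin q) (i : Fin (q - 1)) :
    skipAt (skipSwap q p).1 (skipAt (skipSwap q p).2 i) = skipAt p.1 (skipAt p.2 i) := by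
  ext
  simp only [skipAt_val, skipSwap_fst, skipSwap_snd_val]
  split_ifs <;> omega

lemma skipSwap_ne (p : Fin (q + 1) × Fin q) : skipSwap q p ≠ p := by
  intro h
  have := congrArg (fun p => (p.1 : ℕ)) h
  simp only [skipSwap_fst, skipAt_val] at this
  split_ifs at this <;> omega

lemma skipSwap_involutive : Function.Involutive (skipSwap q) := by
  intro p
  ext
  all_goals
    simp only [skipSwap_fst, skipAt_val, skipSwap_snd_val]
    split_ifs <;> omega

lemma neg_one_pow_skipSwap {R : Type*} [Ring R] (p : Fin (q + 1) × Fin q) :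
    (-1 : R) ^ ((skipSwap q p).1 + (skipSwap q p).2 : ℕ) = -(-1) ^ (p.1 + p.2 : ℕ) := by
  have : ((skipSwap q p).1 + (skipSwap q p).2 : ℕ) + 1 = p.1 + p.2 ∨
      ((skipSwap q p).1 + (skipSwap q p).2 : ℕ) = p.1 + p.2 + 1 := by
    simp only [skipSwap_fst, skipAt_val, skipSwap_snd_val]
    split_ifs <;> omega
  rcases this with h | h
  · rw [← h, pow_succ, mul_neg_one, neg_neg]
  · rw [h, pow_succ, mul_neg_one]

def koszulCycle (K : Type*) [Field K] {M N : Type*} [AddCommGroup M] [Module K M]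
    [AddCommGroup N] [Module K N] (q : ℕ) (s : Fin (q + 1) → M) (w : Fin (q + 1) → N) :
    (⋀[K]^q M) ⊗[K] N :=
  ∑ k : Fin (q + 1), (-1 : K) ^ (k : ℕ) • (wedge K q (fun i => s (skipAt k i)) ⊗ₜ[K] w k)

lemma IsKoszulMap.apply_koszulCycle {n d t : ℕ}
    {δ : ((⋀[K]^q (S K n d)) ⊗[K] (S K n t)) →ₗ[K]
      ((⋀[K]^(q - 1) (S K n d)) ⊗[K] (S K n (t + d)))}
    (hδ : IsKoszulMap K n d q t δ) {s : Fin (q + 1) → S K n d} {w : Fin (q + 1) → S K n t}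
    (hsw : ∀ j k, mulSW K (s j) (w k) = mulSW K (s k) (w j)) :
    δ (koszulCycle K q s w) = 0 := by
  have expand : δ (koszulCycle K q s w) = ∑ p : Fin (q + 1) × Fin q,
      (-1 : K) ^ (p.1 + p.2 : ℕ) • (wedge K (q - 1) (fun i => s (skipAt p.1 (skipAt p.2 i)))
        ⊗ₜ[K] mulSW K (s (skipAt p.1 p.2)) (w p.1)) := by
    rw [IsKoszulMap] at hδ
    simp only [koszulCycle, map_sum, map_smul, hδ, Finset.smul_sum, smul_smul, ← pow_add,
      Fintype.sum_prod_type]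
  rw [expand]
  refine Finset.sum_ninvolution (skipSwap q) (fun p => ?_) (fun p _ => skipSwap_ne p)
    (fun _ => Finset.mem_univ _) skipSwap_involutive
  rw [neg_one_pow_skipSwap, skipAt_skipSwap]
  simp_rw [skipAt_skipAt_skipSwap]
  rw [skipSwap_fst, hsw p.1, ← add_smul, add_neg_cancel, zero_smul]

lemma wedge_skipAt_eq_ιMulti_family {M : Type*} [AddCommGroup M] [Module K M]
    (s : Fin (q + 1) → M) (k : Fin (q + 1)) :
    wedge K q (fun i => s (skipAt k i)) =
      exteriorPower.ιMulti_family K q s (Set.powersetCard.ofFinEmbEquiv k.succAboveOrderEmb) := by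
  rw [exteriorPower.ιMulti_family, Equiv.symm_apply_apply, skipAt_eq_succAbove]
  rfl

lemma LinearIndependent.wedge_skipAt {M : Type*} [AddCommGroup M] [Module K M]
    {s : Fin (q + 1) → M} (hs : LinearIndependent K s) :
    LinearIndependent K (fun k : Fin (q + 1) => wedge K q (fun i => s (skipAt k i))) := by
  simp only [wedge_skipAt_eq_ιMulti_family]
  refine (exteriorPower.ιMulti_family_linearIndependent_field q hs).comp _ ?_
  exact Set.powersetCard.ofFinEmbEquiv.injective.comp
    fun a b h => Fin.succAbove_left_injective (congrArg DFunLike.coe h)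

lemma koszulCycle_ne_zero {M N : Type*} [AddCommGroup M] [Module K M] [AddCommGroup N] [Module K N]
    {s : Fin (q + 1) → M} {w : Fin (q + 1) → N} (hs : LinearIndependent K s)
    (hw : LinearIndependent K w) : koszulCycle K q s w ≠ 0 := by
  set v := fun k => wedge K q (fun i => s (skipAt k i)) ⊗ₜ[K] w k
  have hv : LinearIndependent K v :=
    (hs.wedge_skipAt.tmul_of_isDomain hw).comp (fun k => (k, k)) fun a b h => congrArg Prod.fst h
  intro h
  have h0 := (Fintype.linearIndependent_iff (v := v)).1 hv _ h 0
  rw [Fin.val_zero, pow_zero] at h0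
  exact one_ne_zero h0

section Homogeneous

variable {n m e : ℕ}

lemma exists_linearIndependent_homogeneous {r : ℕ} (h : r ≤ (n + m).choose n) :
    ∃ p : Fin r → S K n m, LinearIndependent K p := by
  classical
  have hcard : Fintype.card (Fin r) ≤ Fintype.card (Sym (Fin (n + 1)) m) := by
    rwa [Fintype.card_fin, Sym.card_sym_eq_choose, Fintype.card_fin, Nat.add_right_comm,
      Nat.add_sub_cancel, ← Nat.choose_symm_add]
  obtain ⟨f⟩ := Function.Embedding.nonempty_of_card_le hcard
  let exps : Fin r → Fin (n + 1) →₀ ℕ := fun j =>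
    Multiset.toFinsupp (f j : Multiset (Fin (n + 1)))
  have hexps : Function.Injective exps :=
    Multiset.toFinsupp.injective.comp (Sym.coe_injective.comp f.injective)
  have hdeg (j : Fin r) : (exps j).degree = m := (Multiset.toFinsupp_sum_eq _).trans (f j).2
  refine ⟨fun j => ⟨monomial (exps j) 1, (mem_homogeneousSubmodule _ _).2
    (isHomogeneous_monomial _ (hdeg j))⟩, ?_⟩
  exact LinearIndependent.of_comp (S K n m).subtype
    ((basisMonomials _ K).linearIndependent.comp exps hexps)

noncomputable def mulXPow (i : Fin (n + 1)) (h : m ≤ e) : S K n m →ₗ[K] S K n e :=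
  LinearMap.codRestrict _ (LinearMap.mulLeft K (X i ^ (e - m)) ∘ₗ (S K n m).subtype) fun p =>
    (mem_homogeneousSubmodule _ _).2 <| by
      simpa [Nat.sub_add_cancel h] using ((isHomogeneous_X_pow i (e - m)).mul
        ((mem_homogeneousSubmodule _ _).1 p.2))

lemma coe_mulXPow (i : Fin (n + 1)) (h : m ≤ e) (p : S K n m) :
    (mulXPow i h p : MvPolynomial (Fin (n + 1)) K) =
      X i ^ (e - m) * (p : MvPolynomial (Fin (n + 1)) K) :=
  rfl

lemma mulXPow_injective (i : Fin (n + 1)) (h : m ≤ e) :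
    Function.Injective (mulXPow (K := K) i h) := fun _ _ hp =>
  Subtype.ext <| mul_left_cancel₀ (pow_ne_zero _ (X_ne_zero i)) (congrArg Subtype.val hp)

end Homogeneous

end

theorem stmt2_general (K : Type*) [Field K] (n : ℕ) (d : ℕ)
    (q t : ℕ)
    (hqN : q ≤ Nat.choose (n + d) n - 1) (hqt : q + 1 ≤ Nat.choose (n + t) n)
    (δ : ((⋀[K]^q (S K n d)) ⊗[K] (S K n t)) →ₗ[K]
         ((⋀[K]^(q - 1) (S K n d)) ⊗[K] (S K n (t + d))))
    (hδ : IsKoszulMap K n d q t δ) :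
    LinearMap.ker δ ≠ ⊥ := by
  obtain ⟨p, hp⟩ : ∃ p : Fin (q + 1) → S K n (min d t), LinearIndependent K p := by
    refine exists_linearIndependent_homogeneous ?_
    rcases min_cases d t with ⟨hm, -⟩ | ⟨hm, -⟩ <;> rw [hm]
    · have := Nat.choose_pos (Nat.le_add_right n d)
      omega
    · exact hqt
  let s := mulXPow 0 (min_le_left d t) ∘ p
  let w := mulXPow 0 (min_le_right d t) ∘ p
  have hsw (j k : Fin (q + 1)) : mulSW K (s j) (w k) = mulSW K (s k) (w j) := by
    apply Subtype.ext
    simp only [mulSW, s, w, Function.comp_apply, coe_mulXPow]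
    ring
  have hs : LinearIndependent K s := hp.map' _ (LinearMap.ker_eq_bot.2 (mulXPow_injective _ _))
  have hw : LinearIndependent K w := hp.map' _ (LinearMap.ker_eq_bot.2 (mulXPow_injective _ _))
  exact (Submodule.ne_bot_iff _).2
    ⟨koszulCycle K q s w, hδ.apply_koszulCycle hsw, koszulCycle_ne_zero hs hw⟩

/-- for `1 ≤ q ≤ C(n+d,n) − 1`, `t ≥ 1`, `q + 1 ≤ C(n+t,n)`, the Koszul map
`δ_{q,t} : ⋀^q S_d ⊗ S_t → ⋀^{q−1} S_d ⊗ S_{t+d}` has nonzero kernel. -/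
theorem stmt2 (K : Type*) [Field K] [CharZero K] (n : ℕ) (hn : 1 ≤ n) (d : ℕ) (hd : 1 ≤ d)
    (q t : ℕ) (hq : 1 ≤ q) (ht : 1 ≤ t)
    (hqN : q ≤ Nat.choose (n + d) n - 1) (hqt : q + 1 ≤ Nat.choose (n + t) n)
    (δ : ((⋀[K]^q (S K n d)) ⊗[K] (S K n t)) →ₗ[K]
         ((⋀[K]^(q - 1) (S K n d)) ⊗[K] (S K n (t + d))))
    (hδ : IsKoszulMap K n d q t δ) :
    LinearMap.ker δ ≠ ⊥ :=
  stmt2_general K n d q t hqN hqt δ hδ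
end

section
/- Let q ≥ 1 and 1 ≤ t ≤ d be integers, let u ∈ S_{d−t} be nonzero, and let w_0,…,w_q ∈ S_t be linearly independent over K. Then the element Σ_{i=0}^q (−1)^i (u·w_0 ∧ ⋯ ∧ \widehat{u·w_i} ∧ ⋯ ∧ u·w_q) ⊗ w_i is a nonzero element of ⋀^q S_d ⊗ S_t, where \widehat{u·w_i} denotes omission of the i-th wedge factor. -/
/-! Contract the `S_t` factor with a linear form that is nonzero on `w_0` and vanishes on the
other `w_i`. Only the `i = 0` term survives, a nonzero multiple of `u·w_1 ∧ ⋯ ∧ u·w_q`; this wedge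
is nonzero because multiplication by `u ≠ 0` is injective, so the `u·w_i` are still linearly
independent. -/

open TensorProduct

theorem Module.exists_dual_apply_ne_zero_forall_ne {K V ι : Type*} [Field K] [AddCommGroup V]
    [Module K V] {v : ι → V} (hv : LinearIndependent K v) (i : ι) :
    ∃ f : Module.Dual K V, f (v i) ≠ 0 ∧ ∀ j ≠ i, f (v j) = 0 := by
  have hi : v i ∉ Submodule.span K (v '' {j | j ≠ i}) :=
    hv.notMem_span_image (by simp)
  obtain ⟨f, hfi, hf⟩ := Submodule.exists_dual_map_eq_bot_of_notMem hi inferInstance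
  refine ⟨f, hfi, fun j hj => ?_⟩
  have : f (v j) ∈ (Submodule.span K (v '' {j | j ≠ i})).map f :=
    Submodule.mem_map_of_mem (Submodule.subset_span ⟨j, hj, rfl⟩)
  simpa [hf] using this

theorem TensorProduct.sum_tmul_ne_zero_of_linearIndependent {K M N ι : Type*} [Field K]
    [AddCommGroup M] [Module K M] [AddCommGroup N] [Module K N] [Fintype ι]
    (a : ι → M) {w : ι → N} (hw : LinearIndependent K w) {i : ι} (ha : a i ≠ 0) :
    ∑ j, a j ⊗ₜ[K] w j ≠ 0 := by
  obtain ⟨f, hfi, hf⟩ := Module.exists_dual_apply_ne_zero_forall_ne hw i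
  intro h
  have := congrArg ((TensorProduct.rid K M).toLinearMap ∘ₗ LinearMap.lTensor M f) h
  simp only [map_sum, LinearMap.comp_apply, LinearMap.lTensor_tmul, LinearEquiv.coe_coe,
    TensorProduct.rid_tmul, map_zero] at this
  rw [Fintype.sum_eq_single i fun j hj => by rw [hf j hj, zero_smul]] at this
  exact ha ((smul_eq_zero.mp this).resolve_left hfi)

theorem exteriorPower.ιMulti_ne_zero_of_linearIndependent {K V : Type*} [Field K]
    [AddCommGroup V] [Module K V] {m : ℕ} {v : Fin m → V} (hv : LinearIndependent K v) :
    exteriorPower.ιMulti K m v ≠ 0 := by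
  simpa [exteriorPower.ιMulti_family] using
    (exteriorPower.ιMulti_family_linearIndependent_field (n := m) hv).ne_zero
      (Set.powersetCard.ofFinEmbEquiv (OrderIso.refl (Fin m)).toOrderEmbedding)

theorem skipAt_injective {a : ℕ} (j : Fin a) : Function.Injective (skipAt j) := by
  intro i₁ i₂ h
  unfold skipAt at h
  apply Fin.ext
  split_ifs at h <;> simp only [Fin.mk.injEq] at h <;> omega

section

variable {K : Type*} [Field K] {n d b : ℕ}

noncomputable def mulSWLeft (s : S K n d) : S K n b →ₗ[K] S K n (b + d) where
  toFun := mulSW K s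
  map_add' _ _ := Subtype.ext (mul_add _ _ _)
  map_smul' c _ := Subtype.ext (mul_smul_comm c _ _)

theorem mulSWLeft_injective {s : S K n d} (hs : s ≠ 0) :
    Function.Injective (mulSWLeft (b := b) s) := fun _ _ h =>
  Subtype.ext (mul_left_cancel₀ (Subtype.coe_ne_coe.mpr hs) (congrArg Subtype.val h))

end

/-- for `q ≥ 1`, `1 ≤ t ≤ d`, `u ∈ S_{d−t}` nonzero and `w_0, …, w_q ∈ S_t`
linearly independent, the element
`Σ_i (−1)^i (u·w_0 ∧ ⋯ ∧ \widehat{u·w_i} ∧ ⋯ ∧ u·w_q) ⊗ w_i` of `⋀^q S_d ⊗ S_t` is nonzero. -/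
theorem stmt4 (K : Type*) [Field K] (n : ℕ) (d : ℕ)
    (q t : ℕ) (htd : t ≤ d)
    (u : S K n (d - t)) (hu : u ≠ 0)
    (w : Fin (q + 1) → S K n t) (hw : LinearIndependent K w) :
    (∑ i : Fin (q + 1), ((-1 : K) ^ (i : ℕ)) •
        ((wedge K q fun l =>
            scast K (show t + (d - t) = d by omega) (mulSW K u (w (skipAt i l)))) ⊗ₜ[K] w i))
      ≠ (0 : (⋀[K]^q (S K n d)) ⊗[K] (S K n t)) := by
  have hdt : t + (d - t) = d := by omega
  set μ := (scast K hdt).toLinearMap ∘ₗ mulSWLeft u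
  have hμw : LinearIndependent K (μ ∘ w) :=
    hw.map' μ <| LinearMap.ker_eq_bot.mpr <|
      (scast K hdt).injective.comp (mulSWLeft_injective hu)
  simp_rw [TensorProduct.smul_tmul']
  refine TensorProduct.sum_tmul_ne_zero_of_linearIndependent _ hw (i := 0) ?_
  rw [Fin.val_zero, pow_zero, one_smul]
  exact exteriorPower.ιMulti_ne_zero_of_linearIndependent (hμw.comp _ (skipAt_injective 0))
end

section
/- The kernel of φ equals the ideal of R generated by the six 2×2 minors of the symmetric matrix [[Y_{00},Y_{01},Y_{02}],[Y_{01},Y_{11},Y_{12}],[Y_{02},Y_{12},Y_{22}]], namely Q_1 = Y_{00}Y_{11} − Y_{01}^2, Q_2 = Y_{00}Y_{22} − Y_{02}^2, Q_3 = Y_{11}Y_{22} − Y_{12}^2, Q_4 = Y_{00}Y_{12} − Y_{01}Y_{02}, Q_5 = Y_{11}Y_{02} − Y_{01}Y_{12}, Q_6 = Y_{22}Y_{01} − Y_{02}Y_{12}. (This is the homogeneous ideal of the Veronese surface φ_{O(2)}(P^2) ⊂ P^5.) -/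
noncomputable section

open MvPolynomial

/-- The `K`-algebra map `φ : K[Y_00,Y_01,Y_02,Y_11,Y_12,Y_22] → K[x_0,x_1,x_2]` with
`φ(Y_ij) = x_i·x_j`, the variables being indexed `0 ↦ Y_00, 1 ↦ Y_01, 2 ↦ Y_02, 3 ↦ Y_11,
4 ↦ Y_12, 5 ↦ Y_22`. -/
def veroneseSurfaceMap (K : Type*) [Field K] :
    MvPolynomial (Fin 6) K →ₐ[K] MvPolynomial (Fin 3) K :=
  MvPolynomial.aeval
    ![X 0 * X 0, X 0 * X 1, X 0 * X 2, X 1 * X 1, X 1 * X 2, X 2 * X 2]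

/- ### Auxiliary material -/

namespace VeroneseAux

variable {K : Type*} [Field K]

/-- The monomial `Y₀^a Y₁^b Y₂^c Y₃^d Y₄^e Y₅^f`. -/
def P6 (a b c d e f : ℕ) : MvPolynomial (Fin 6) K :=
  X 0 ^ a * X 1 ^ b * X 2 ^ c * X 3 ^ d * X 4 ^ e * X 5 ^ f

/-- The monomial `x₀^a x₁^b x₂^c`. -/
def P3 (a b c : ℕ) : MvPolynomial (Fin 3) K := X 0 ^ a * X 1 ^ b * X 2 ^ c

/-- The canonical (normal-form) monomial mapping to `x₀^A x₁^B x₂^C`. -/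
def canonP (A B C : ℕ) : MvPolynomial (Fin 6) K :=
  P6 (A/2) (A%2 * (B%2)) (A%2 * (C%2) * (1 - B%2)) (B/2) ((1 - A%2) * (B%2) * (C%2)) (C/2)

/-- The ideal generated by the six minors. -/
def vIdeal (K : Type*) [Field K] : Ideal (MvPolynomial (Fin 6) K) :=
  Ideal.span ({X 0 * X 3 - X 1 ^ 2, X 0 * X 5 - X 2 ^ 2, X 3 * X 5 - X 4 ^ 2,
               X 0 * X 4 - X 1 * X 2, X 3 * X 2 - X 1 * X 4, X 5 * X 1 - X 2 * X 4} :
    Set (MvPolynomial (Fin 6) K))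

lemma gen_mem (q : MvPolynomial (Fin 6) K)
    (hq : q ∈ ({X 0 * X 3 - X 1 ^ 2, X 0 * X 5 - X 2 ^ 2, X 3 * X 5 - X 4 ^ 2,
               X 0 * X 4 - X 1 * X 2, X 3 * X 2 - X 1 * X 4, X 5 * X 1 - X 2 * X 4} :
      Set (MvPolynomial (Fin 6) K))) : q ∈ vIdeal K :=
  Ideal.subset_span hq

lemma P6_congr {a b c d e f a' b' c' d' e' f' : ℕ} (h1 : a = a') (h2 : b = b')
    (h3 : c = c') (h4 : d = d') (h5 : e = e') (h6 : f = f') :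
    (P6 a b c d e f : MvPolynomial (Fin 6) K) = P6 a' b' c' d' e' f' := by
  subst h1 h2 h3 h4 h5 h6; rfl

lemma base (a b c d e f A B C : ℕ) (h : b + c + e ≤ 1)
    (hA : 2*a+b+c = A) (hB : b+2*d+e = B) (hC : c+e+2*f = C) :
    (canonP A B C : MvPolynomial (Fin 6) K) = P6 a b c d e f := by
  unfold canonP
  rw [show A%2 = b+c from by omega, show B%2 = b+e from by omega,
      show C%2 = c+e from by omega, show A/2 = a from by omega,
      show B/2 = d from by omega, show C/2 = f from by omega]
  have hb : b ≤ 1 := by omega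
  have hc : c ≤ 1 := by omega
  have he : e ≤ 1 := by omega
  interval_cases b <;> interval_cases c <;> interval_cases e <;> first
    | (refine P6_congr ?_ ?_ ?_ ?_ ?_ ?_ <;> omega)
    | omega

/-- Key lemma: every monomial is congruent mod `vIdeal` to its normal form. -/
lemma key : ∀ n a b c d e f A B C : ℕ, b + c + e ≤ n →
    2*a+b+c = A → b+2*d+e = B → c+e+2*f = C →
    (P6 a b c d e f : MvPolynomial (Fin 6) K) - canonP A B C ∈ vIdeal K := by
  intro n
  induction n using Nat.strong_induction_on with
  | _ n IH =>
    intro a b c d e f A B C hn hA hB hC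
    by_cases hsmall : b + c + e ≤ 1
    · rw [base a b c d e f A B C hsmall hA hB hC, sub_self]
      exact zero_mem _
    · have step : ∀ a' b' c' d' e' f' : ℕ, b' + c' + e' < b + c + e →
          2*a'+b'+c' = A → b'+2*d'+e' = B → c'+e'+2*f' = C →
          (P6 a b c d e f : MvPolynomial (Fin 6) K) - P6 a' b' c' d' e' f' ∈ vIdeal K →
          (P6 a b c d e f : MvPolynomial (Fin 6) K) - canonP A B C ∈ vIdeal K := by
        intro a' b' c' d' e' f' hlt hA' hB' hC' hdiff
        have h2 : (P6 a' b' c' d' e' f' : MvPolynomial (Fin 6) K) - canonP A B C ∈ vIdeal K :=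
          IH (b' + c' + e') (by omega) a' b' c' d' e' f' A B C le_rfl hA' hB' hC'
        have := add_mem hdiff h2
        rwa [sub_add_sub_cancel] at this
      rcases Nat.lt_or_ge b 2 with hb2 | hb2
      case _ =>
        rcases Nat.lt_or_ge c 2 with hc2 | hc2
        case _ =>
          rcases Nat.lt_or_ge e 2 with he2 | he2
          case _ =>
            -- b,c,e ≤ 1 and b+c+e ≥ 2 : two distinct mixed variables
            rcases Nat.lt_or_ge b 1 with hb1 | hb1
            case _ =>
              -- b = 0, so c = e = 1 : use Q6
              obtain ⟨c', rfl⟩ : ∃ c', c = c' + 1 := ⟨c - 1, by omega⟩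
              obtain ⟨e', rfl⟩ : ∃ e', e = e' + 1 := ⟨e - 1, by omega⟩
              refine step a (b+1) c' d e' (f+1) (by omega) (by omega) (by omega) (by omega) ?_
              have hid : (P6 a b (c'+1) d (e'+1) f : MvPolynomial (Fin 6) K)
                  - P6 a (b+1) c' d e' (f+1)
                  = -(P6 a b c' d e' f * (X 5 * X 1 - X 2 * X 4)) := by
                simp only [P6]; ring
              rw [hid]
              exact neg_mem (Ideal.mul_mem_left _ _ (gen_mem _ (by simp)))
            case _ =>
              rcases Nat.lt_or_ge c 1 with hc1 | hc1
              case _ =>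
                -- b = 1, c = 0, so e = 1 : use Q5
                obtain ⟨b', rfl⟩ : ∃ b', b = b' + 1 := ⟨b - 1, by omega⟩
                obtain ⟨e', rfl⟩ : ∃ e', e = e' + 1 := ⟨e - 1, by omega⟩
                refine step a b' (c+1) (d+1) e' f (by omega) (by omega) (by omega) (by omega) ?_
                have hid : (P6 a (b'+1) c d (e'+1) f : MvPolynomial (Fin 6) K)
                    - P6 a b' (c+1) (d+1) e' f
                    = -(P6 a b' c d e' f * (X 3 * X 2 - X 1 * X 4)) := by
                  simp only [P6]; ring
                rw [hid]
                exact neg_mem (Ideal.mul_mem_left _ _ (gen_mem _ (by simp)))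
              case _ =>
                -- b ≥ 1, c ≥ 1 : use Q4
                obtain ⟨b', rfl⟩ : ∃ b', b = b' + 1 := ⟨b - 1, by omega⟩
                obtain ⟨c', rfl⟩ : ∃ c', c = c' + 1 := ⟨c - 1, by omega⟩
                refine step (a+1) b' c' d (e+1) f (by omega) (by omega) (by omega) (by omega) ?_
                have hid : (P6 a (b'+1) (c'+1) d e f : MvPolynomial (Fin 6) K)
                    - P6 (a+1) b' c' d (e+1) f
                    = -(P6 a b' c' d e f * (X 0 * X 4 - X 1 * X 2)) := by
                  simp only [P6]; ring
                rw [hid]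
                exact neg_mem (Ideal.mul_mem_left _ _ (gen_mem _ (by simp)))
          case _ =>
            -- e ≥ 2 : use Q3
            obtain ⟨e', rfl⟩ : ∃ e', e = e' + 2 := ⟨e - 2, by omega⟩
            refine step a b c (d+1) e' (f+1) (by omega) (by omega) (by omega) (by omega) ?_
            have hid : (P6 a b c d (e'+2) f : MvPolynomial (Fin 6) K) - P6 a b c (d+1) e' (f+1)
                = -(P6 a b c d e' f * (X 3 * X 5 - X 4 ^ 2)) := by
              simp only [P6]; ring
            rw [hid]
            exact neg_mem (Ideal.mul_mem_left _ _ (gen_mem _ (by simp)))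
        case _ =>
          -- c ≥ 2 : use Q2
          obtain ⟨c', rfl⟩ : ∃ c', c = c' + 2 := ⟨c - 2, by omega⟩
          refine step (a+1) b c' d e (f+1) (by omega) (by omega) (by omega) (by omega) ?_
          have hid : (P6 a b (c'+2) d e f : MvPolynomial (Fin 6) K) - P6 (a+1) b c' d e (f+1)
              = -(P6 a b c' d e f * (X 0 * X 5 - X 2 ^ 2)) := by
            simp only [P6]; ring
          rw [hid]
          exact neg_mem (Ideal.mul_mem_left _ _ (gen_mem _ (by simp)))
      case _ =>
        -- b ≥ 2 : use Q1
        obtain ⟨b', rfl⟩ : ∃ b', b = b' + 2 := ⟨b - 2, by omega⟩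
        refine step (a+1) b' c (d+1) e f (by omega) (by omega) (by omega) (by omega) ?_
        have hid : (P6 a (b'+2) c d e f : MvPolynomial (Fin 6) K) - P6 (a+1) b' c (d+1) e f
            = -(P6 a b' c d e f * (X 0 * X 3 - X 1 ^ 2)) := by
          simp only [P6]; ring
        rw [hid]
        exact neg_mem (Ideal.mul_mem_left _ _ (gen_mem _ (by simp)))

/- ### The linear normal-form machinery -/

/-- The canonical lift of an exponent vector of `K[x₀,x₁,x₂]`. -/
def Lf (t : Fin 3 →₀ ℕ) : Fin 6 →₀ ℕ :=
  Finsupp.equivFunOnFinite.symm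
    ![t 0 / 2, t 0 % 2 * (t 1 % 2), t 0 % 2 * (t 2 % 2) * (1 - t 1 % 2),
      t 1 / 2, (1 - t 0 % 2) * (t 1 % 2) * (t 2 % 2), t 2 / 2]

/-- The linear "canonical lift" map `K[x] → R`. -/
def Lam (K : Type*) [Field K] : MvPolynomial (Fin 3) K →ₗ[K] MvPolynomial (Fin 6) K :=
  Finsupp.lsum K (fun t => monomial (Lf t)) ∘ₗ (AddMonoidAlgebra.coeffLinearEquiv K).toLinearMap

lemma Lam_monomial (t : Fin 3 →₀ ℕ) (r : K) :
    Lam K (monomial t r) = monomial (Lf t) r := by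
  simp [Lam]

/-- The image exponent vector under `φ`. -/
def Tf (u : Fin 6 →₀ ℕ) : Fin 3 →₀ ℕ :=
  Finsupp.equivFunOnFinite.symm
    ![2 * u 0 + u 1 + u 2, u 1 + 2 * u 3 + u 4, u 2 + u 4 + 2 * u 5]

lemma mono6 (u : Fin 6 →₀ ℕ) :
    (monomial u 1 : MvPolynomial (Fin 6) K) = P6 (u 0) (u 1) (u 2) (u 3) (u 4) (u 5) := by
  rw [monomial_eq, Finsupp.prod_pow]
  simp [Fin.prod_univ_six, P6]

lemma mono3 (t : Fin 3 →₀ ℕ) :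
    (monomial t 1 : MvPolynomial (Fin 3) K) = P3 (t 0) (t 1) (t 2) := by
  rw [monomial_eq, Finsupp.prod_pow]
  simp [Fin.prod_univ_three, P3]

lemma v5 {α : Type*} (a b c d e f : α) : (![a,b,c,d,e,f] : Fin 6 → α) 5 = f := rfl

lemma mono_eq_C_mul {σ : Type*} (t : σ →₀ ℕ) (r : K) :
    (monomial t r : MvPolynomial σ K) = C r * monomial t 1 := by
  rw [C_mul_monomial, mul_one]

lemma vmap_monomial (u : Fin 6 →₀ ℕ) (r : K) :
    veroneseSurfaceMap K (monomial u r) = monomial (Tf u) r := by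
  rw [veroneseSurfaceMap, aeval_monomial, Finsupp.prod_pow, Fin.prod_univ_six,
      mono_eq_C_mul, mono3]
  have h0 : Tf u 0 = 2 * u 0 + u 1 + u 2 := by simp [Tf]
  have h1 : Tf u 1 = u 1 + 2 * u 3 + u 4 := by simp [Tf]
  have h2 : Tf u 2 = u 2 + u 4 + 2 * u 5 := by simp [Tf]
  rw [h0, h1, h2]
  simp only [v5, Matrix.cons_val_zero, Matrix.cons_val_one, Matrix.head_cons,
    Matrix.cons_val_two, Matrix.tail_cons, Matrix.cons_val_three, Matrix.cons_val_four,
    Matrix.cons_val_succ, P3, algebraMap_eq]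
  ring

lemma Lf_mono (t : Fin 3 →₀ ℕ) :
    (monomial (Lf t) 1 : MvPolynomial (Fin 6) K) = canonP (t 0) (t 1) (t 2) := by
  rw [mono6]
  refine P6_congr ?_ ?_ ?_ ?_ ?_ ?_ <;> simp [Lf, v5]

/-- Every polynomial is congruent to its normal form modulo the ideal. -/
lemma sub_normal_mem (P : MvPolynomial (Fin 6) K) :
    P - Lam K (veroneseSurfaceMap K P) ∈ vIdeal K := by
  induction P using MvPolynomial.induction_on' with
  | monomial u r =>
    rw [vmap_monomial, Lam_monomial, mono_eq_C_mul, mono_eq_C_mul (Lf (Tf u)) r,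
        ← mul_sub, Lf_mono, mono6]
    refine Ideal.mul_mem_left _ _ ?_
    have h0 : Tf u 0 = 2 * u 0 + u 1 + u 2 := by simp [Tf]
    have h1 : Tf u 1 = u 1 + 2 * u 3 + u 4 := by simp [Tf]
    have h2 : Tf u 2 = u 2 + u 4 + 2 * u 5 := by simp [Tf]
    exact key (u 1 + u 2 + u 4) (u 0) (u 1) (u 2) (u 3) (u 4) (u 5) _ _ _
      le_rfl h0.symm h1.symm h2.symm
  | add p q hp hq =>
    have : (p + q) - Lam K (veroneseSurfaceMap K (p + q))
        = (p - Lam K (veroneseSurfaceMap K p)) + (q - Lam K (veroneseSurfaceMap K q)) := by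
      rw [map_add, map_add]; ring
    rw [this]
    exact add_mem hp hq

end VeroneseAux

open VeroneseAux in
/-- the kernel of `φ` is the ideal generated by the six `2×2` minors of the
generic symmetric `3×3` matrix: `ker φ = (Q_1, …, Q_6)`. -/
theorem stmt10 (K : Type*) [Field K] [CharZero K] :
    RingHom.ker (veroneseSurfaceMap K).toRingHom =
      Ideal.span ({X 0 * X 3 - X 1 ^ 2,   -- Q₁ = Y₀₀Y₁₁ − Y₀₁²
                   X 0 * X 5 - X 2 ^ 2,   -- Q₂ = Y₀₀Y₂₂ − Y₀₂²
                   X 3 * X 5 - X 4 ^ 2,   -- Q₃ = Y₁₁Y₂₂ − Y₁₂²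
                   X 0 * X 4 - X 1 * X 2, -- Q₄ = Y₀₀Y₁₂ − Y₀₁Y₀₂
                   X 3 * X 2 - X 1 * X 4, -- Q₅ = Y₁₁Y₀₂ − Y₀₁Y₁₂
                   X 5 * X 1 - X 2 * X 4  -- Q₆ = Y₂₂Y₀₁ − Y₀₂Y₁₂
                  } : Set (MvPolynomial (Fin 6) K)) := by
  show RingHom.ker (veroneseSurfaceMap K).toRingHom = vIdeal K
  apply le_antisymm
  · intro P hP
    have h0 : veroneseSurfaceMap K P = 0 := hP
    have := sub_normal_mem (K := K) P
    rwa [h0, map_zero, sub_zero] at this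
  · rw [vIdeal, Ideal.span_le]
    rintro q hq
    simp only [Set.mem_insert_iff, Set.mem_singleton_iff] at hq
    rcases hq with rfl | rfl | rfl | rfl | rfl | rfl <;>
      · show veroneseSurfaceMap K _ = 0
        simp [veroneseSurfaceMap, v5]; ring

end
end
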